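/- arXiv:2310.13621 — 4 statements merged into one kernel-verified Lean document; each statement's English description precedes it below -/
import Mathlib

section
/- Let n ≥ 2 and let P = C_{2^n} ≀ C_2. Then the automorphism group Aut(P) is a 2-group. -/
open Equiv

/-- The action of `Equiv.Perm ι` on `ι → G` by permuting coordinates. -/
def permAut (ι G : Type*) [Group G] : Equiv.Perm ι →* MulAut (ι → G) where
  toFun σ := MulEquiv.arrowCongr σ (MulEquiv.refl G)
  map_one' := by ext f x; rfl
  map_mul' σ τ := by ext f x; rfl

/-- The regular wreath product `C_{2^n} ≀ C₂`, realized as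
`(C_{2^n} × C_{2^n}) ⋊ C₂` where `C₂` (realized as `Equiv.Perm (Fin 2)`)
acts by swapping the two coordinates of the base group. -/
abbrev WreathC2 (n : ℕ) :=
  SemidirectProduct (Fin 2 → Multiplicative (ZMod (2 ^ n))) (Equiv.Perm (Fin 2))
    (permAut (Fin 2) (Multiplicative (ZMod (2 ^ n))))

/-!
The base `B = C_{2^n} × C_{2^n}` is characteristic: its elements commute with all their
conjugates, whereas `(f, σ)` does not commute with its conjugate by `((w, 1), 1)` unless `w² = 1`.
Hence an automorphism `ψ` commutes with the swap on `B`, so on `B`, viewed as a module over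
`ℤ[C₂] ≅ ℤ√1`, it is multiplication by some `z = a + b√1`. For a generator `u` of `C_{2^n}`,
`ψ` maps `(u, u)` to `(u, u)^(a + b)` and preserves its order `2^n`, so `a + b` is odd.
Then `z² ≡ 1 mod 2`, so `z^(2^n) ≡ 1 mod 2^n` and `χ = ψ^(2^n)` fixes `B` pointwise. Finally
`χ` sends the swap `t` to `c t` with `c ∈ B`, so `χ^k t = c^k t` and `χ^(2^n) = 1`.
-/

@[simp]
theorem permAut_apply {ι G : Type*} [Group G] (σ : Perm ι) (f : ι → G) (i : ι) :
    permAut ι G σ f i = f (σ.symm i) :=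
  rfl

namespace Zsqrtd

theorem two_pow_dvd_pow_two_pow_sub_one {z : ℤ√1} (hz : Odd (z.re + z.im)) (n : ℕ) :
    (2 ^ (n + 1) : ℤ√1) ∣ z ^ 2 ^ (n + 1) - 1 := by
  have h2 : ((2 : ℕ) : ℤ√1) ∣ z ^ 2 - 1 ^ 2 := by
    obtain ⟨k, hk⟩ := hz
    rw [show ((2 : ℕ) : ℤ√1) = ((2 : ℤ) : ℤ√1) by norm_cast, Zsqrtd.intCast_dvd]
    simp only [sq, re_sub, re_mul, one_mul, re_one, im_sub, im_mul, im_one, sub_zero]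
    exact ⟨⟨z.re ^ 2 - z.re * (2 * k + 1) + 2 * k ^ 2 + 2 * k, by
      linear_combination (z.im + 2 * k + 1 - z.re) * hk⟩, ⟨z.re * z.im, by ring⟩⟩
  have := dvd_sub_pow_of_dvd_sub h2 n
  rwa [← pow_mul, ← pow_succ', one_pow, one_pow, Nat.cast_ofNat] at this

end Zsqrtd

namespace MulAut

variable {G : Type*} [Group G]

theorem pow_apply_eq_pow_mul (χ : MulAut G) {c t : G} (hc : χ c = c) (ht : χ t = c * t)
    (k : ℕ) : (χ ^ k) t = c ^ k * t := by
  induction k with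
  | zero => simp
  | succ k ih => rw [pow_succ', mul_apply, ih, map_mul, map_pow, hc, ht, pow_succ, mul_assoc]

theorem odd_of_apply_eq_zpow (ψ : MulAut G) {g : G} {m : ℕ}
    (hg : orderOf g = 2 ^ (m + 1)) {c : ℤ} (hc : ψ g = g ^ c) : Odd c := by
  rw [← Int.not_even_iff_odd]
  rintro ⟨d, rfl⟩
  have h : ψ (g ^ 2 ^ m) = 1 := by
    rw [map_pow, hc, ← zpow_natCast, ← zpow_mul,
      show (d + d) * ((2 ^ m : ℕ) : ℤ) = ((2 ^ (m + 1) : ℕ) : ℤ) * d by push_cast; ring,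
      zpow_mul, zpow_natCast, ← hg, pow_orderOf_eq_one, one_zpow]
  have := orderOf_dvd_of_pow_eq_one ((map_eq_one_iff ψ ψ.injective).mp h)
  rw [hg, Nat.pow_dvd_pow_iff_le_right one_lt_two] at this
  omega

end MulAut

namespace SemidirectProduct

variable {N G : Type*} [CommGroup N] [Group G] {φ : G →* MulAut N}

theorem mul_inl_mul_inv (g : N ⋊[φ] G) (n : N) : g * inl n * g⁻¹ = inl (φ g.right n) := by
  ext <;> simp [mul_comm]

theorem commute_inl_conj (g : N ⋊[φ] G) (n : N) : Commute (inl n) (g * inl n * g⁻¹) := by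
  rw [mul_inl_mul_inv]
  exact (Commute.all _ _).map inl

end SemidirectProduct

abbrev Wreath2 (A : Type*) [Group A] :=
  (Fin 2 → A) ⋊[permAut (Fin 2) A] Perm (Fin 2)

namespace Wreath2

open SemidirectProduct

variable {A : Type*} [CommGroup A]

theorem perm_fin_two (s : Perm (Fin 2)) : s = 1 ∨ s = swap 0 1 := by
  revert s; decide

theorem right_eq_one_of_commute {w : A} (hw : w ^ 2 ≠ 1) {p : Wreath2 A}
    (hp : Commute p (inl (Pi.mulSingle 0 w) * p * (inl (Pi.mulSingle 0 w))⁻¹)) :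
    p.right = 1 := by
  refine (perm_fin_two p.right).resolve_right fun hσ => hw ?_
  have h0 : p.left 0 * (p.left 1 * w⁻¹) = w * p.left 0 * p.left 1 := by
    simpa [hσ, Pi.mulSingle_apply] using congrArg (fun q : Wreath2 A => q.left 0) hp.eq
  rw [mul_assoc, mul_comm w, mul_assoc] at h0
  have hw' : w⁻¹ = w := mul_left_cancel (mul_left_cancel h0)
  rw [sq]
  nth_rewrite 1 [← hw']
  exact inv_mul_cancel w

variable {w : A}

theorem right_map_inl (hw : w ^ 2 ≠ 1) (ψ : MulAut (Wreath2 A)) (f : Fin 2 → A) :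
    (ψ (inl f)).right = 1 := by
  refine right_eq_one_of_commute hw ?_
  simpa using (commute_inl_conj (ψ.symm (inl (Pi.mulSingle 0 w))) f).map ψ.toMonoidHom

theorem map_inl (hw : w ^ 2 ≠ 1) (ψ : MulAut (Wreath2 A)) (f : Fin 2 → A) :
    ψ (inl f) = inl (ψ (inl f)).left := by
  conv_lhs => rw [← inl_left_mul_inr_right (ψ (inl f)), right_map_inl hw, map_one, mul_one]

theorem right_map_inr_swap (hw : w ^ 2 ≠ 1) (ψ : MulAut (Wreath2 A)) :
    (ψ (inr (swap 0 1))).right = swap 0 1 := by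
  refine (perm_fin_two _).resolve_left fun h => ?_
  have hinl : ψ (inr (swap 0 1)) = inl (ψ (inr (swap 0 1))).left := by
    conv_lhs => rw [← inl_left_mul_inr_right (ψ (inr (swap 0 1))), h, map_one, mul_one]
  have := right_map_inl hw ψ.symm (ψ (inr (swap 0 1))).left
  rw [← hinl, MulEquiv.symm_apply_apply, right_inr] at this
  exact absurd this (by decide)

theorem map_inl_permAut_swap (hw : w ^ 2 ≠ 1) (ψ : MulAut (Wreath2 A)) (f : Fin 2 → A) :
    ψ (inl (permAut (Fin 2) A (swap 0 1) f)) =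
      inl (permAut (Fin 2) A (swap 0 1) (ψ (inl f)).left) := by
  rw [inl_aut, map_inv inr, map_mul, map_mul, map_inv, map_inl hw ψ f, mul_inl_mul_inv,
    right_map_inr_swap hw, left_inl]

/-- `ℤ√1 ≅ ℤ[C₂]` acting on the base, with `√1` acting as the swap. -/
def baseAct (z : ℤ√1) : (Fin 2 → A) →* (Fin 2 → A) :=
  zpowGroupHom z.re * (zpowGroupHom z.im).comp (permAut (Fin 2) A (swap 0 1)).toMonoidHom

theorem baseAct_apply (z : ℤ√1) (f : Fin 2 → A) (i : Fin 2) :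
    baseAct z f i = f i ^ z.re * f (swap 0 1 i) ^ z.im :=
  rfl

theorem baseAct_one (f : Fin 2 → A) : baseAct 1 f = f := by
  funext i
  simp [baseAct_apply]

theorem baseAct_mul (z z' : ℤ√1) (f : Fin 2 → A) :
    baseAct (z * z') f = baseAct z (baseAct z' f) := by
  funext i
  simp only [baseAct_apply, Zsqrtd.re_mul, Zsqrtd.im_mul, swap_apply_self]
  simp only [mul_zpow, ← zpow_mul, zpow_add, mul_one, mul_comm, mul_left_comm, mul_assoc]

theorem baseAct_const (z : ℤ√1) (x : A) :
    baseAct z (fun _ => x) = (fun _ => x) ^ (z.re + z.im) := by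
  funext i
  simp [baseAct_apply, zpow_add]

theorem baseAct_eq_self {m : ℕ} {f : Fin 2 → A} (hf : f ^ m = 1) {z : ℤ√1}
    (hre : (m : ℤ) ∣ z.re - 1) (him : (m : ℤ) ∣ z.im) : baseAct z f = f := by
  obtain ⟨q, hq⟩ := hre
  obtain ⟨r, hr⟩ := him
  have hσf : permAut (Fin 2) A (swap 0 1) f ^ m = 1 := by rw [← map_pow, hf, map_one]
  calc baseAct z f = f ^ (1 + m * q) * permAut (Fin 2) A (swap 0 1) f ^ (m * r) := by
        rw [← hq, ← hr, add_sub_cancel]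
        rfl
    _ = f := by simp [zpow_add, zpow_mul, hf, hσf]

theorem pow_apply_inl {ψ : MulAut (Wreath2 A)} {z : ℤ√1}
    (hψ : ∀ f, ψ (inl f) = inl (baseAct z f)) (k : ℕ) (f : Fin 2 → A) :
    (ψ ^ k) (inl f) = inl (baseAct (z ^ k) f) := by
  induction k with
  | zero => simp [baseAct_one]
  | succ k ih => rw [pow_succ', MulAut.mul_apply, ih, hψ, pow_succ', baseAct_mul]

theorem exists_baseAct {u : A} (hu : ∀ x, x ∈ Subgroup.zpowers u) (hw : w ^ 2 ≠ 1)
    (ψ : MulAut (Wreath2 A)) : ∃ z : ℤ√1, ∀ f, ψ (inl f) = inl (baseAct z f) := by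
  set v := (ψ (inl (Pi.mulSingle 0 u))).left
  obtain ⟨a, ha⟩ := Subgroup.mem_zpowers_iff.mp (hu (v 0))
  obtain ⟨b, hb⟩ := Subgroup.mem_zpowers_iff.mp (hu (v 1))
  have hsingle : Pi.mulSingle 1 u = permAut (Fin 2) A (swap 0 1) (Pi.mulSingle 0 u) := by
    funext j
    fin_cases j <;> simp
  let F : (Fin 2 → A) →* Wreath2 A := ψ.toMonoidHom.comp inl
  let G : (Fin 2 → A) →* Wreath2 A := inl.comp (baseAct ⟨a, b⟩)
  suffices h : F = G from ⟨⟨a, b⟩, DFunLike.congr_fun h⟩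
  refine MonoidHom.pi_ext fun i x => ?_
  suffices h : F.comp (MonoidHom.mulSingle _ i) = G.comp (MonoidHom.mulSingle _ i) from
    DFunLike.congr_fun h x
  rw [MonoidHom.eq_iff_eq_on_generator hu]
  fin_cases i
  · show ψ (inl (Pi.mulSingle 0 u)) = inl (baseAct ⟨a, b⟩ (Pi.mulSingle 0 u))
    rw [map_inl hw]
    congr 1
    funext j
    fin_cases j <;> simp [baseAct_apply, ha, hb, v]
  · show ψ (inl (Pi.mulSingle 1 u)) = inl (baseAct ⟨a, b⟩ (Pi.mulSingle 1 u))
    rw [hsingle, map_inl_permAut_swap hw]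
    congr 1
    funext j
    fin_cases j <;> simp [baseAct_apply, ha, hb, v]

theorem pow_apply_inl_eq_self (hw : w ^ 2 ≠ 1) {u : A} (hu : ∀ x, x ∈ Subgroup.zpowers u)
    {n : ℕ} (hA : Nat.card A = 2 ^ (n + 1)) (ψ : MulAut (Wreath2 A)) (f : Fin 2 → A) :
    (ψ ^ 2 ^ (n + 1)) (inl f) = inl f := by
  obtain ⟨z, hz⟩ := exists_baseAct hu hw ψ
  have hord : orderOf (inl fun _ => u : Wreath2 A) = 2 ^ (n + 1) := by
    rw [← hA, ← orderOf_eq_card_of_forall_mem_zpowers hu]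
    exact orderOf_injective ((inl (φ := permAut (Fin 2) A)).comp (Pi.constMonoidHom _ _))
      (inl_injective.comp fun _ _ h => congrFun h 0) u
  have hodd : Odd (z.re + z.im) :=
    ψ.odd_of_apply_eq_zpow hord (by rw [hz, baseAct_const, map_zpow])
  have hdvd : ((2 ^ (n + 1) : ℤ) : ℤ√1) ∣ z ^ 2 ^ (n + 1) - 1 := by
    exact_mod_cast Zsqrtd.two_pow_dvd_pow_two_pow_sub_one hodd n
  rw [Zsqrtd.intCast_dvd, Zsqrtd.re_sub, Zsqrtd.im_sub, Zsqrtd.re_one, Zsqrtd.im_one,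
    sub_zero] at hdvd
  rw [pow_apply_inl hz, baseAct_eq_self (m := 2 ^ (n + 1)) ?_ (mod_cast hdvd.1) (mod_cast hdvd.2)]
  funext i
  rw [Pi.pow_apply, ← hA, Pi.one_apply, pow_card_eq_one']

theorem pow_eq_one_of_forall_apply_inl (hw : w ^ 2 ≠ 1) (χ : MulAut (Wreath2 A)) {m : ℕ}
    (hm : ∀ x : A, x ^ m = 1) (hχ : ∀ f, χ (inl f) = inl f) : χ ^ m = 1 := by
  have hfix (k : ℕ) (f : Fin 2 → A) : (χ ^ k) (inl f) = inl f := by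
    induction k with
    | zero => rfl
    | succ k ih => rw [pow_succ', MulAut.mul_apply, ih, hχ]
  set c := (χ (inr (swap 0 1))).left
  have ht : χ (inr (swap 0 1)) = inl c * inr (swap 0 1) := by
    conv_lhs => rw [← inl_left_mul_inr_right (χ (inr (swap 0 1))), right_map_inr_swap hw χ]
  have hc : (inl c : Wreath2 A) ^ m = 1 := by
    rw [← map_pow (inl (φ := permAut (Fin 2) A)), show c ^ m = 1 from funext fun i => hm (c i),
      map_one]
  refine MulEquiv.ext fun p => ?_
  rw [MulAut.one_apply, ← inl_left_mul_inr_right p]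
  rcases perm_fin_two p.right with h | h <;>
    simp [h, hfix, χ.pow_apply_eq_pow_mul (hχ c) ht, hc]

theorem isPGroup_mulAut [IsCyclic A] {n : ℕ} (hA : Nat.card A = 2 ^ n) (hn : 2 ≤ n) :
    IsPGroup 2 (MulAut (Wreath2 A)) := by
  obtain ⟨m, rfl⟩ : ∃ m, n = m + 1 := ⟨n - 1, by omega⟩
  obtain ⟨u, hu⟩ := exists_zpow_surjective A
  have hgen : ∀ x, x ∈ Subgroup.zpowers u := fun x => Subgroup.mem_zpowers_iff.mpr (hu x)
  have hw : u ^ 2 ≠ 1 := by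
    refine pow_ne_one_of_lt_orderOf two_ne_zero ?_
    rw [orderOf_eq_card_of_forall_mem_zpowers hgen, hA]
    calc 2 < 2 ^ 2 := by norm_num
      _ ≤ 2 ^ (m + 1) := Nat.pow_le_pow_right two_pos hn
  intro ψ
  refine ⟨(m + 1) + (m + 1), ?_⟩
  rw [pow_add, pow_mul]
  exact pow_eq_one_of_forall_apply_inl hw _ (fun x => by rw [← hA]; exact pow_card_eq_one')
    (pow_apply_inl_eq_self hw hgen hA ψ)

end Wreath2

theorem stmt1 (n : ℕ) (hn : 2 ≤ n) : IsPGroup 2 (MulAut (WreathC2 n)) :=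
  Wreath2.isPGroup_mulAut (Nat.card_zmod _) hn
end

section
/- Let n ≥ 2 and let P = C_{2^n} ≀ C_2. Then the 2-rank of P equals 2, i.e. every elementary abelian 2-subgroup of P has order at most 4, and P contains an elementary abelian subgroup of order 4. -/
open Equiv

/-!
Let `A` be a group in which at most two elements square to `1` (e.g. `A = C_{2^n}`) and let
`H ≤ A ≀ C₂` have exponent `2`. Projecting onto `C₂` gives `|H| = |K| · |image|` with
`K = H ∩ A²`. Both coordinates of an element of `K` square to `1`, so `|K| ≤ 4`, which settles
the case `H ≤ A²`. Otherwise `H` contains some `g₀ ∉ A²`, and for `k ∈ K` the relation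
`(k g₀)² = 1` determines the second coordinate of `k` from the first, so `|K| ≤ 2` and
`|H| ≤ 2 · 2`. Conversely, if `t ∈ A` has order `2`, the diagonal copy of `⟨t⟩ × C₂` is an
elementary abelian subgroup of order `4`.
-/

theorem Subgroup.card_eq_card_ker_inf_mul_card_map {G G' : Type*} [Group G] [Group G']
    (f : G →* G') (H : Subgroup G) :
    Nat.card H = Nat.card (f.ker ⊓ H : Subgroup G) * Nat.card (H.map f) := by
  rw [← relIndex_ker H f, ← inf_relIndex_right, ← relIndex_bot_left, ← relIndex_bot_left]
  exact (relIndex_mul_relIndex _ _ _ bot_le inf_le_right).symm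

theorem IsCyclic.card_sq_eq_one_le_two {G : Type*} [Group G] [Finite G] [IsCyclic G] :
    Nat.card {x : G // x ^ 2 = 1} ≤ 2 := by
  classical
  have := Fintype.ofFinite G
  rw [Nat.card_eq_fintype_card, Fintype.card_subtype]
  exact IsCyclic.card_pow_eq_one_le two_pos

namespace Equiv.Perm

lemma card_fin_two : Nat.card (Perm (Fin 2)) = 2 := by
  rw [Nat.card_perm, Nat.card_fin]; rfl

lemma fin_two_eq_one_or_eq_swap (σ : Perm (Fin 2)) : σ = 1 ∨ σ = swap 0 1 := by
  revert σ; decide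

end Equiv.Perm

abbrev WreathTwo (A : Type*) [Group A] :=
  SemidirectProduct (Fin 2 → A) (Perm (Fin 2)) (permAut (Fin 2) A)

namespace WreathTwo

open SemidirectProduct

variable {A : Type*} [Group A]

lemma mul_left_apply (g h : WreathTwo A) (i : Fin 2) :
    (g * h).left i = g.left i * h.left (g.right.symm i) := rfl

lemma mul_left_apply_of_right_eq_one {g : WreathTwo A} (hg : g.right = 1) (h : WreathTwo A)
    (i : Fin 2) : (g * h).left i = g.left i * h.left i := by
  rw [mul_left_apply, hg]; rfl

lemma sq_left_apply_of_right_eq_one {g : WreathTwo A} (hg : g.right = 1) (i : Fin 2) :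
    (g ^ 2).left i = g.left i ^ 2 := by
  rw [sq, sq, mul_left_apply_of_right_eq_one hg]

lemma sq_left_zero_of_right_eq_swap {g : WreathTwo A} (hg : g.right = swap 0 1) :
    (g ^ 2).left 0 = g.left 0 * g.left 1 := by
  rw [sq, mul_left_apply, hg]; rfl

lemma ext_of_right_eq_one {g h : WreathTwo A} (hg : g.right = 1) (hh : h.right = 1)
    (h0 : g.left 0 = h.left 0) (h1 : g.left 1 = h.left 1) : g = h := by
  ext i
  · fin_cases i
    · exact h0
    · exact h1
  · rw [hg, hh]

section Finite

variable [Finite A] {H : Subgroup (WreathTwo A)}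

theorem card_ker_inf_le_sq (hH : ∀ g ∈ H, g ^ 2 = 1) :
    Nat.card (rightHom.ker ⊓ H : Subgroup (WreathTwo A)) ≤
      Nat.card {x : A // x ^ 2 = 1} ^ 2 := by
  have hsq (k : (rightHom.ker ⊓ H : Subgroup (WreathTwo A))) (i : Fin 2) :
      k.1.left i ^ 2 = 1 := by
    rw [← sq_left_apply_of_right_eq_one k.2.1, hH _ k.2.2]; rfl
  rw [sq, ← Nat.card_prod]
  refine Nat.card_le_card_of_injective
    (fun k => (⟨k.1.left 0, hsq k 0⟩, ⟨k.1.left 1, hsq k 1⟩)) fun k k' hkk' => ?_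
  simp only [Prod.mk.injEq, Subtype.mk.injEq] at hkk'
  exact Subtype.ext (ext_of_right_eq_one k.2.1 k'.2.1 hkk'.1 hkk'.2)

theorem card_ker_inf_le (hH : ∀ g ∈ H, g ^ 2 = 1) {g₀ : WreathTwo A} (hg₀ : g₀ ∈ H)
    (hg₀r : g₀.right ≠ 1) :
    Nat.card (rightHom.ker ⊓ H : Subgroup (WreathTwo A)) ≤ Nat.card {x : A // x ^ 2 = 1} := by
  have hsq (k : (rightHom.ker ⊓ H : Subgroup (WreathTwo A))) : k.1.left 0 ^ 2 = 1 := by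
    rw [← sq_left_apply_of_right_eq_one k.2.1, hH _ k.2.2]; rfl
  have hswap : g₀.right = swap 0 1 := g₀.right.fin_two_eq_one_or_eq_swap.resolve_left hg₀r
  have hleft_one (k : (rightHom.ker ⊓ H : Subgroup (WreathTwo A))) :
      k.1.left 1 = (k.1.left 0 * g₀.left 0)⁻¹ * (g₀.left 1)⁻¹ := by
    have hkg₀ : (k.1 * g₀).right = swap 0 1 := by
      rw [mul_right, show k.1.right = 1 from k.2.1, one_mul, hswap]
    have hsq₀ := sq_left_zero_of_right_eq_swap hkg₀
    rw [hH _ (H.mul_mem k.2.2 hg₀), mul_left_apply_of_right_eq_one k.2.1,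
      mul_left_apply_of_right_eq_one k.2.1, one_left, Pi.one_apply] at hsq₀
    exact eq_mul_inv_of_mul_eq (eq_inv_of_mul_eq_one_right hsq₀.symm)
  refine Nat.card_le_card_of_injective (fun k => ⟨k.1.left 0, hsq k⟩) fun k k' hkk' => ?_
  simp only [Subtype.mk.injEq] at hkk'
  exact Subtype.ext (ext_of_right_eq_one k.2.1 k'.2.1 hkk' (by rw [hleft_one, hleft_one, hkk']))

theorem card_le_four (hA : Nat.card {x : A // x ^ 2 = 1} ≤ 2) (hH : ∀ g ∈ H, g ^ 2 = 1) :
    Nat.card H ≤ 4 := by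
  rw [Subgroup.card_eq_card_ker_inf_mul_card_map rightHom H]
  by_cases hmap : H.map rightHom = ⊥
  · rw [hmap, Subgroup.card_bot, mul_one]
    calc _ ≤ Nat.card {x : A // x ^ 2 = 1} ^ 2 := card_ker_inf_le_sq hH
      _ ≤ 2 ^ 2 := Nat.pow_le_pow_left hA 2
  · obtain ⟨g₀, hg₀, hg₀r⟩ : ∃ g₀ ∈ H, g₀.right ≠ 1 := by
      simpa [Subgroup.map_eq_bot_iff, SetLike.not_le_iff_exists] using hmap
    calc _ ≤ 2 * 2 :=
          Nat.mul_le_mul ((card_ker_inf_le hH hg₀ hg₀r).trans hA)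
            ((Subgroup.card_le_card_group _).trans Perm.card_fin_two.le)
      _ = 4 := rfl

end Finite

def diagonalHom : A × Perm (Fin 2) →* WreathTwo A where
  toFun p := ⟨fun _ => p.1, p.2⟩
  map_one' := rfl
  map_mul' _ _ := rfl

lemma diagonalHom_injective : Function.Injective (diagonalHom (A := A)) :=
  fun _ _ h => Prod.ext (congrFun (congrArg left h) 0) (congrArg right h)

theorem exists_card_eq_four {t : A} (ht : orderOf t = 2) :
    ∃ H : Subgroup (WreathTwo A), (∀ g ∈ H, g ^ 2 = 1) ∧ Nat.card H = 4 := by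
  refine ⟨((Subgroup.zpowers t).prod ⊤).map diagonalHom, ?_, ?_⟩
  · rintro _ ⟨⟨x, σ⟩, ⟨hx, -⟩, rfl⟩
    have hx2 : x ^ 2 = 1 := orderOf_dvd_iff_pow_eq_one.mp (ht ▸ orderOf_dvd_of_mem_zpowers hx)
    have hσ2 : σ ^ 2 = 1 := by clear hx; revert σ; decide
    rw [← map_pow, Prod.pow_mk, hx2, hσ2, Prod.mk_one_one, map_one]
  · rw [Subgroup.card_map_of_injective diagonalHom_injective,
      Nat.card_congr (Subgroup.prodEquiv _ _).toEquiv, Nat.card_prod, Nat.card_zpowers, ht,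
      Subgroup.card_top, Perm.card_fin_two]

end WreathTwo

theorem stmt2 (n : ℕ) (hn : 2 ≤ n) :
    (∀ H : Subgroup (WreathC2 n), (∀ g ∈ H, g ^ 2 = 1) → Nat.card H ≤ 4) ∧
    (∃ H : Subgroup (WreathC2 n), (∀ g ∈ H, g ^ 2 = 1) ∧ Nat.card H = 4) := by
  obtain ⟨t, ht⟩ : ∃ t : Multiplicative (ZMod (2 ^ n)), orderOf t = 2 := by
    refine exists_prime_orderOf_dvd_card' 2 ?_
    rw [Nat.card_eq_fintype_card, Fintype.card_multiplicative, ZMod.card]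
    exact dvd_pow_self 2 (by omega)
  exact ⟨fun _ => WreathTwo.card_le_four IsCyclic.card_sq_eq_one_le_two,
    WreathTwo.exists_card_eq_four ht⟩
end

section
/- Let n ≥ 2 and let P = C_{2^n} ≀ C_2. Then the quotient P/Z(P) is isomorphic to the dihedral group D_{2^{n+1}} of order 2^{n+1}. -/
open Equiv

/-!
Record the difference of the two coordinates of the base group: `(f, 1) ↦ r (f 0 - f 1)` and
`(f, swap) ↦ sr (f 1 - f 0)` is a surjective homomorphism `C_m ≀ C₂ → D_m`. Its kernel is the
diagonal `{(a, a)}` of the base group, which is exactly the center once `C_m` is nontrivial: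
an element outside the base fails to commute with `(1, 0)`, and a non-diagonal one fails to
commute with the swap.
-/

theorem Equiv.Perm.fin_two_eq_one_or_swap (σ : Perm (Fin 2)) : σ = 1 ∨ σ = swap 0 1 := by
  revert σ; decide

abbrev CyclicWreathC2 (m : ℕ) :=
  SemidirectProduct (Fin 2 → Multiplicative (ZMod m)) (Perm (Fin 2))
    (permAut (Fin 2) (Multiplicative (ZMod m)))

namespace CyclicWreathC2

variable {m : ℕ}

open DihedralGroup Multiplicative

def toDihedral (m : ℕ) : CyclicWreathC2 m →* DihedralGroup m where
  toFun x := if x.right = 1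
    then r (toAdd (x.left 0) - toAdd (x.left 1))
    else sr (toAdd (x.left 1) - toAdd (x.left 0))
  map_one' := by simp
  map_mul' := by
    rintro ⟨f, σ⟩ ⟨g, τ⟩
    rcases σ.fin_two_eq_one_or_swap with rfl | rfl <;>
      rcases τ.fin_two_eq_one_or_swap with rfl | rfl <;>
      simp <;> abel

theorem toDihedral_surjective : Function.Surjective (toDihedral m) := by
  rintro (j | j)
  · exact ⟨⟨fun i => ofAdd (if i = 0 then j else 0), 1⟩, by simp [toDihedral]⟩
  · refine ⟨⟨fun i => ofAdd (if i = 0 then 0 else j), swap 0 1⟩, ?_⟩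
    simp [toDihedral]

theorem mem_ker_toDihedral {x : CyclicWreathC2 m} :
    x ∈ (toDihedral m).ker ↔ x.right = 1 ∧ x.left 0 = x.left 1 := by
  obtain ⟨f, σ⟩ := x
  rcases σ.fin_two_eq_one_or_swap with rfl | rfl
  · simp [toDihedral, ← r_zero, sub_eq_zero]
  · simp [toDihedral, ← r_zero]

theorem mem_center_iff (hm : m ≠ 1) {x : CyclicWreathC2 m} :
    x ∈ Subgroup.center (CyclicWreathC2 m) ↔ x.right = 1 ∧ x.left 0 = x.left 1 := by
  obtain ⟨f, σ⟩ := x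
  rw [Subgroup.mem_center_iff]
  constructor
  · intro hx
    have hswap := congrFun (congrArg SemidirectProduct.left (hx ⟨1, swap 0 1⟩)) 0
    have hbase := congrFun (congrArg SemidirectProduct.left (hx ⟨Pi.mulSingle 0 (ofAdd 1), 1⟩)) 1
    refine ⟨?_, by simpa using hswap.symm⟩
    rcases σ.fin_two_eq_one_or_swap with rfl | rfl
    · rfl
    · have h10 : (1 : ZMod m) = 0 := by simpa using hbase
      exact absurd (ZMod.one_eq_zero_iff.mp h10) hm
  · rintro ⟨rfl, hf⟩ ⟨g, τ⟩
    have hconst : ∀ i, f i = f 0 := Fin.forall_fin_two.mpr ⟨rfl, hf.symm⟩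
    ext i
    · simp [hconst, mul_comm]
    · simp

theorem ker_toDihedral (hm : m ≠ 1) :
    (toDihedral m).ker = Subgroup.center (CyclicWreathC2 m) := by
  ext x
  rw [mem_ker_toDihedral, mem_center_iff hm]

theorem nonempty_quotient_center_mulEquiv_dihedralGroup (hm : m ≠ 1) :
    Nonempty ((CyclicWreathC2 m ⧸ Subgroup.center (CyclicWreathC2 m)) ≃* DihedralGroup m) :=
  ⟨(QuotientGroup.quotientMulEquivOfEq (ker_toDihedral hm).symm).trans
    (QuotientGroup.quotientKerEquivOfSurjective _ toDihedral_surjective)⟩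

end CyclicWreathC2

theorem stmt3 (n : ℕ) (hn : 2 ≤ n) :
    Nonempty ((WreathC2 n ⧸ Subgroup.center (WreathC2 n)) ≃* DihedralGroup (2 ^ n)) :=
  CyclicWreathC2.nonempty_quotient_center_mulEquiv_dihedralGroup <|
    (Nat.one_lt_two_pow (by omega)).ne'
end

section
/- Let A be a finite-dimensional algebra over a field k, X a finite-dimensional A-module and Y a submodule of X such that X/Y is simple and the socle soc(Y) is simple. If Y is not a direct summand of X, then soc(X) = soc(Y); in particular X is indecomposable. -/
/-- The socle of the submodule `Y` of `X`, viewed inside `X`: the sum of all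
simple submodules of `X` contained in `Y` (simple submodules are the atoms of
the submodule lattice). -/
def socleIn {A X : Type*} [Ring A] [AddCommGroup X] [Module A X]
    (Y : Submodule A X) : Submodule A X :=
  sSup {m : Submodule A X | m ≤ Y ∧ IsAtom m}

/-!
If a simple submodule `m` were not contained in `Y`, then `m ∩ Y = 0` since `m` is simple and
`m + Y = X` since `Y` is maximal, so `Y` would be a direct summand. Hence every simple submodule
of `X` lies in `Y`, which gives `soc X = soc Y`, and `soc X` is then the unique simple submodule
of `X`. In a nontrivial decomposition `X = S ⊕ T` each of the (Artinian) summands would contain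
it, contradicting `S ∩ T = 0`.
-/

section Lattice

variable {α : Type*} [Lattice α] [BoundedOrder α]

theorem IsCoatom.isCompl_of_isAtom_of_not_le {y m : α} (hy : IsCoatom y) (hm : IsAtom m)
    (hmy : ¬ m ≤ y) : IsCompl y m :=
  ⟨(hm.not_le_iff_disjoint.mp hmy).symm, hy.not_le_iff_codisjoint.mp hmy⟩

theorem IsCompl.eq_bot_or_eq_bot_of_forall_isAtom_eq [IsAtomic α] {s t a : α}
    (hst : IsCompl s t) (ha : IsAtom a) (huniq : ∀ m : α, IsAtom m → m = a) :
    s = ⊥ ∨ t = ⊥ := by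
  by_contra! h
  obtain ⟨ms, hms, hms_le⟩ := (eq_bot_or_exists_atom_le s).resolve_left h.1
  obtain ⟨mt, hmt, hmt_le⟩ := (eq_bot_or_exists_atom_le t).resolve_left h.2
  have hle : a ≤ s ⊓ t := le_inf (huniq ms hms ▸ hms_le) (huniq mt hmt ▸ hmt_le)
  exact ha.1 (le_bot_iff.mp (hst.inf_eq_bot ▸ hle))

end Lattice

section Module

variable {A X : Type*} [Ring A] [AddCommGroup X] [Module A X]

theorem socleIn_eq_of_isAtom_le {Y Z : Submodule A X} (h : ∀ m, IsAtom m → m ≤ Z → m ≤ Y)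
    (hYZ : Y ≤ Z) : socleIn Z = socleIn Y := by
  unfold socleIn
  congr 1
  ext m
  exact ⟨fun ⟨hmZ, hm⟩ => ⟨h m hm hmZ, hm⟩, fun ⟨hmY, hm⟩ => ⟨hmY.trans hYZ, hm⟩⟩

theorem eq_socleIn_of_isAtom {Y m : Submodule A X} (hsoc : IsAtom (socleIn Y)) (hm : IsAtom m)
    (hmY : m ≤ Y) : m = socleIn Y :=
  (hsoc.le_iff.mp (le_sSup ⟨hmY, hm⟩)).resolve_left hm.1

end Module

theorem stmt9_general (k A X : Type) [Field k] [Ring A] [Algebra k A]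
    [AddCommGroup X] [Module k X] [Module A X] [IsScalarTower k A X]
    [FiniteDimensional k X]
    (Y : Submodule A X)
    (hquot : IsSimpleModule A (X ⧸ Y))
    (hsoc : IsAtom (socleIn Y))
    (hnotsum : ¬ ∃ S : Submodule A X, IsCompl Y S) :
    socleIn (⊤ : Submodule A X) = socleIn Y ∧
    ∀ S T : Submodule A X, IsCompl S T → S = ⊥ ∨ T = ⊥ := by
  have hatom_le : ∀ m : Submodule A X, IsAtom m → m ≤ Y := fun m hm => by
    by_contra hmY
    exact hnotsum ⟨m, (isSimpleModule_iff_isCoatom.mp hquot).isCompl_of_isAtom_of_not_le hm hmY⟩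
  have : IsArtinian A X := isArtinian_of_tower k inferInstance
  exact ⟨socleIn_eq_of_isAtom_le (fun m hm _ => hatom_le m hm) le_top,
    fun S T hST => hST.eq_bot_or_eq_bot_of_forall_isAtom_eq hsoc
      fun m hm => eq_socleIn_of_isAtom hsoc hm (hatom_le m hm)⟩

theorem stmt9 (k A X : Type) [Field k] [Ring A] [Algebra k A] [FiniteDimensional k A]
    [AddCommGroup X] [Module k X] [Module A X] [IsScalarTower k A X]
    [FiniteDimensional k X]
    (Y : Submodule A X)
    (hquot : IsSimpleModule A (X ⧸ Y))
    (hsoc : IsAtom (socleIn Y))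
    (hnotsum : ¬ ∃ S : Submodule A X, IsCompl Y S) :
    socleIn (⊤ : Submodule A X) = socleIn Y ∧
    ∀ S T : Submodule A X, IsCompl S T → S = ⊥ ∨ T = ⊥ :=
  stmt9_general k A X Y hquot hsoc hnotsum
end
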